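/- Let ABC be a triangle and let ω be the circle obtained by reflecting the circumcircle of ABC across line AB. If equal cevians AA₁ and BB₁ of triangle ABC intersect at a point lying on ω, then AC = BC. -/

import Mathlib

/-!
Since `QA = QB`, the reflection of `Q` across `AB` is also its reflection through the midpoint
of `AB`, so `O ∈ ω` says that the reflection `A + B - O` of `O` through that midpoint lies on the
circumcircle. Write `O = A + x (B - A) + y (C - A)`; then `AO = (x + y) AA₁` and
`BO = (1 - x) BB₁`, so the equal cevians give `(1 - x) AO = (x + y) BO`. The circle condition and
this one are two polynomial equations in `‖B - A‖²`, `‖C - A‖²` and `⟪B - A, C - A⟫`, and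
eliminating gives `‖B - A‖² = 2 ⟪B - A, C - A⟫`, which is `AC = BC`.
-/

open EuclideanGeometry Real

noncomputable section

abbrev Pt : Type := EuclideanSpace ℝ (Fin 2)

theorem AffineIndependent.linearIndependent_vsub_pair {k V P : Type*} [Ring k] [AddCommGroup V]
    [Module k V] [AddTorsor V P] {p₀ p₁ p₂ : P} (h : AffineIndependent k ![p₀, p₁, p₂]) :
    LinearIndependent k ![p₁ -ᵥ p₀, p₂ -ᵥ p₀] := by
  rw [affineIndependent_iff_linearIndependent_vsub k _ (0 : Fin 3),
    ← linearIndependent_equiv (finSuccAboveEquiv (0 : Fin 3))] at h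
  convert h using 1
  ext i
  fin_cases i <;> rfl

section Affine

open AffineMap AffineSubspace

variable {V P : Type*} [NormedAddCommGroup V] [InnerProductSpace ℝ V] [MetricSpace P]
  [NormedAddTorsor V P]

theorem eq_midpoint_of_mem_affineSpan_pair_of_mem_perpBisector {A B p : P} (hAB : A ≠ B)
    (hline : p ∈ line[ℝ, A, B]) (hperp : p ∈ perpBisector A B) : p = midpoint ℝ A B := by
  obtain ⟨r, rfl⟩ := mem_affineSpan_pair_iff_exists_lineMap_eq.mp hline
  rw [mem_perpBisector_iff_inner_eq, lineMap_vsub_left, real_inner_smul_left,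
    real_inner_self_eq_norm_sq, ← dist_eq_norm_vsub' V] at hperp
  have hr : r = 1 / 2 :=
    mul_right_cancel₀ (pow_ne_zero 2 (dist_ne_zero.mpr hAB)) (by linear_combination hperp)
  rw [hr, midpoint, invOf_eq_inv, one_div]

theorem midpoint_eq_midpoint_of_inner_vsub_eq_zero {A B Q Q' : P} (hAB : A ≠ B)
    (hQ : dist Q A = dist Q B) (hmid : midpoint ℝ Q Q' ∈ line[ℝ, A, B])
    (hperp : inner ℝ (Q' -ᵥ Q) (B -ᵥ A) = 0) : midpoint ℝ Q Q' = midpoint ℝ A B := by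
  refine eq_midpoint_of_mem_affineSpan_pair_of_mem_perpBisector hAB hmid ?_
  rw [← mem_perpBisector_iff_dist_eq, mem_perpBisector_iff_inner_eq] at hQ
  rw [mem_perpBisector_iff_inner_eq, ← vsub_add_vsub_cancel _ Q, inner_add_left,
    midpoint_vsub_left, real_inner_smul_left, hperp, mul_zero, zero_add, hQ]

end Affine

-- `β = ‖B - A‖²`, `γ = ‖C - A‖²`, `δ = ⟪B - A, C - A⟫` and `O = A + x • (B - A) + y • (C - A)`.
theorem eq_two_mul_of_cevian_relations {β γ δ x y : ℝ} (hx : x ≠ 1) (hy : y ≠ 0) (hxy : x + y ≠ 0)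
    (hcirc : (1 - x) ^ 2 * β - 2 * (1 - x) * y * δ + y ^ 2 * γ = (1 - x) * β - y * γ)
    (hlen : (1 - x) ^ 2 * (x ^ 2 * β + 2 * x * y * δ + y ^ 2 * γ) =
      (x + y) ^ 2 * ((1 - x) * β - y * γ)) :
    β = 2 * δ := by
  have h1 : (x + y) * ((x + y) * (1 - x) * β - y * (y + 1) * γ) = 0 := by
    linear_combination -hlen - (x * (1 - x)) * hcirc
  have h2 : (x + y) * (1 - x) * β = y * (y + 1) * γ := by
    linear_combination (mul_eq_zero.mp h1).resolve_left hxy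
  have h3 : ((1 - x) * y) * (β - 2 * δ) = 0 := by
    linear_combination h2 + hcirc
  have h4 : (1 - x) * y ≠ 0 := mul_ne_zero (sub_ne_zero.mpr (Ne.symm hx)) hy
  linear_combination (mul_eq_zero.mp h3).resolve_left h4

section InnerProductSpace

open AffineMap

variable {V : Type*} [NormedAddCommGroup V] [InnerProductSpace ℝ V]

theorem exists_coords_of_mem_segment_cevians {A B C A₁ B₁ O : V}
    (hind : LinearIndependent ℝ ![B - A, C - A])
    (hA₁ : A₁ ∈ line[ℝ, B, C]) (hA₁B : A₁ ≠ B) (hB₁ : B₁ ∈ line[ℝ, A, C]) (hB₁A : B₁ ≠ A)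
    (hO₁ : O ∈ segment ℝ A A₁) (hO₂ : O ∈ segment ℝ B B₁) :
    ∃ x y : ℝ, O - A = x • (B - A) + y • (C - A) ∧ x ≠ 1 ∧ y ≠ 0 ∧ x + y ≠ 0 ∧
      dist A O = (x + y) * dist A A₁ ∧ dist B O = (1 - x) * dist B B₁ := by
  rw [segment_eq_image_lineMap] at hO₁ hO₂
  obtain ⟨t, ⟨ht, -⟩, rfl⟩ := hO₁
  obtain ⟨s, ⟨hs₀, -⟩, hO⟩ := hO₂
  obtain ⟨u, rfl⟩ := mem_affineSpan_pair_iff_exists_lineMap_eq.mp hA₁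
  obtain ⟨v, rfl⟩ := mem_affineSpan_pair_iff_exists_lineMap_eq.mp hB₁
  have hu : u ≠ 0 := by rintro rfl; exact hA₁B (lineMap_apply_zero B C)
  have hv : v ≠ 0 := by rintro rfl; exact hB₁A (lineMap_apply_zero A C)
  have hcoef := LinearIndependent.pair_iff.mp hind (t * (1 - u) - (1 - s)) (t * u - s * v) (by
    have := congrArg (· - A) hO
    simp only [lineMap_apply_module] at this ⊢
    linear_combination (norm := module) -this)
  have hx : t * (1 - u) = 1 - s := by linarith [hcoef.1]
  have hy : t * u = s * v := by linarith [hcoef.2]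
  have hs : s ≠ 0 := by
    rintro rfl
    have ht1 : t = 1 := by linear_combination hx + hy
    exact hu (by simpa [ht1] using hy)
  have hsv : s * v ≠ 0 := mul_ne_zero hs hv
  have hxy : 1 - s + s * v = t := by linear_combination -hx - hy
  refine ⟨1 - s, s * v, ?_, by simpa using hs, hsv, hxy ▸ left_ne_zero_of_mul (hy ▸ hsv), ?_, ?_⟩
  · rw [← hO]
    simp only [lineMap_apply_module]
    module
  · rw [hxy, dist_left_lineMap, Real.norm_of_nonneg ht]
  · rw [← hO, dist_left_lineMap, Real.norm_of_nonneg hs₀, sub_sub_cancel]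

theorem sq_norm_eq_two_mul_inner_of_norm_sub_eq {q w : V} (h : ‖q - w‖ = ‖q‖) :
    ‖w‖ ^ 2 = 2 * inner ℝ q w := by
  have := norm_sub_sq_real q w
  rw [h] at this
  linarith

theorem norm_eq_norm_sub_of_reflected_circle {b c q : V} {x y : ℝ}
    (hqb : ‖q - b‖ = ‖q‖) (hqc : ‖q - c‖ = ‖q‖)
    (hω : ‖q - (b - (x • b + y • c))‖ = ‖q‖)
    (hlen : (1 - x) * ‖x • b + y • c‖ = (x + y) * ‖b - (x • b + y • c)‖)
    (hx : x ≠ 1) (hy : y ≠ 0) (hxy : x + y ≠ 0) :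
    ‖c‖ = ‖c - b‖ := by
  set o := x • b + y • c
  have hb := sq_norm_eq_two_mul_inner_of_norm_sub_eq hqb
  have hc := sq_norm_eq_two_mul_inner_of_norm_sub_eq hqc
  have hω' := sq_norm_eq_two_mul_inner_of_norm_sub_eq hω
  have hcb : inner ℝ c b = inner ℝ b c := real_inner_comm b c
  have ho : ‖o‖ ^ 2 = x ^ 2 * ‖b‖ ^ 2 + 2 * x * y * inner ℝ b c + y ^ 2 * ‖c‖ ^ 2 := by
    simp only [o, ← real_inner_self_eq_norm_sq, inner_add_left, inner_add_right,
      real_inner_smul_left, real_inner_smul_right, hcb]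
    ring
  have hbo : ‖b - o‖ ^ 2 =
      (1 - x) ^ 2 * ‖b‖ ^ 2 - 2 * (1 - x) * y * inner ℝ b c + y ^ 2 * ‖c‖ ^ 2 := by
    simp only [o, ← real_inner_self_eq_norm_sq, inner_sub_left, inner_sub_right, inner_add_left,
      inner_add_right, real_inner_smul_left, real_inner_smul_right, hcb]
    ring
  have hcirc : ‖b - o‖ ^ 2 = (1 - x) * ‖b‖ ^ 2 - y * ‖c‖ ^ 2 := by
    rw [hω', inner_sub_right, inner_add_right, real_inner_smul_right, real_inner_smul_right]
    linear_combination y * hc - (1 - x) * hb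
  have hlen2 : (1 - x) ^ 2 * ‖o‖ ^ 2 = (x + y) ^ 2 * ‖b - o‖ ^ 2 := by
    linear_combination hlen * ((1 - x) * ‖o‖ + (x + y) * ‖b - o‖)
  have key := eq_two_mul_of_cevian_relations hx hy hxy (hbo ▸ hcirc)
    (by rw [← ho, hlen2, hcirc])
  rw [← sq_eq_sq₀ (norm_nonneg _) (norm_nonneg _), norm_sub_sq_real, hcb]
  linarith

end InnerProductSpace

theorem isosceles_of_cevians_meet_on_reflected_circumcircle
    (A B C A₁ B₁ O Q Q' : Pt) (r : ℝ)
    (hABC : AffineIndependent ℝ ![A, B, C])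
    (hQA : dist Q A = r) (hQB : dist Q B = r) (hQC : dist Q C = r)
    (hmid : midpoint ℝ Q Q' ∈ affineSpan ℝ ({A, B} : Set Pt))
    (hperp : (inner ℝ (Q' -ᵥ Q) (B -ᵥ A) : ℝ) = 0)
    (hA₁ : A₁ ∈ affineSpan ℝ ({B, C} : Set Pt)) (hA₁B : A₁ ≠ B)
    (hB₁ : B₁ ∈ affineSpan ℝ ({A, C} : Set Pt)) (hB₁A : B₁ ≠ A)
    (hlen : dist A A₁ = dist B B₁)
    (hO₁ : O ∈ segment ℝ A A₁) (hO₂ : O ∈ segment ℝ B B₁)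
    (hω : dist Q' O = r) :
    dist A C = dist B C := by
  have hAB : A ≠ B := hABC.injective.ne (show (0 : Fin 3) ≠ 1 by decide)
  have hQ' : Q' = A + B - Q := by
    have h := midpoint_eq_midpoint_of_inner_vsub_eq_zero hAB (hQA.trans hQB.symm) hmid hperp
    rw [midpoint_eq_iff, AffineEquiv.pointReflection_apply, midpoint_eq_smul_add,
      invOf_eq_inv] at h
    rw [← h, vsub_eq_sub, vadd_eq_add]
    module
  obtain ⟨x, y, hO, hx, hy, hxy, hAO, hBO⟩ := exists_coords_of_mem_segment_cevians
    hABC.linearIndependent_vsub_pair hA₁ hA₁B hB₁ hB₁A hO₁ hO₂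
  have hsymm := norm_eq_norm_sub_of_reflected_circle (b := B - A) (c := C - A) (q := Q - A)
    (x := x) (y := y) ?_ ?_ ?_ ?_ hx hy hxy
  · rw [dist_comm A, dist_comm B, dist_eq_norm, dist_eq_norm, hsymm, sub_sub_sub_cancel_right]
  · rw [sub_sub_sub_cancel_right, ← dist_eq_norm, ← dist_eq_norm, hQA, hQB]
  · rw [sub_sub_sub_cancel_right, ← dist_eq_norm, ← dist_eq_norm, hQA, hQC]
  · rw [← hO, ← dist_eq_norm Q A, hQA, ← hω, dist_eq_norm, hQ', ← norm_neg]
    congr 1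
    abel
  · rw [← hO, sub_sub_sub_cancel_right, ← dist_eq_norm, ← dist_eq_norm, dist_comm O,
      hAO, hBO, hlen]
    ring
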